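/- Let m ∈ ℝ, q > 0, k = m²/q² - 1, and let N ≥ 0 with N² + k ≥ 0. Define ρ₊ = q²/(m + q·sqrt(N²+k)), assuming m + q·sqrt(N²+k) > 0. Then ρ₊ > 0, and ρ₊ satisfies N² = 1 - 2m/ρ₊ + q²/ρ₊². Moreover ρ₊(1+N) - m > 0 holds if and only if m ≤ 0 or q > m > 0. -/
import Mathlib


/-- With `q > 0`, `k = m²/q² - 1`, `N ≥ 0`, `N² + k ≥ 0` and
`m + q√(N²+k) > 0`, the pseudo-radial function `ρ₊ = q²/(m + q√(N²+k))` is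
positive and satisfies `N² = 1 - 2m/ρ₊ + q²/ρ₊²`.  Moreover
`ρ₊(1+N) - m > 0` holds if and only if `m ≤ 0` or `q > m > 0`. -/
theorem pseudo_radial_plus_properties (m q k N : ℝ) (hq : 0 < q)
    (hk : k = m ^ 2 / q ^ 2 - 1) (hN : 0 ≤ N) (hNk : 0 ≤ N ^ 2 + k)
    (hden : 0 < m + q * Real.sqrt (N ^ 2 + k)) :
    0 < q ^ 2 / (m + q * Real.sqrt (N ^ 2 + k)) ∧
    N ^ 2 = 1 - 2 * m / (q ^ 2 / (m + q * Real.sqrt (N ^ 2 + k)))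
        + q ^ 2 / (q ^ 2 / (m + q * Real.sqrt (N ^ 2 + k))) ^ 2 ∧
    (0 < (q ^ 2 / (m + q * Real.sqrt (N ^ 2 + k))) * (1 + N) - m ↔
      m ≤ 0 ∨ (q > m ∧ 0 < m)) := by
  set s := Real.sqrt (N ^ 2 + k) with hsdef
  have hs0 : 0 ≤ s := Real.sqrt_nonneg _
  have hs2 : s ^ 2 = N ^ 2 + k := Real.sq_sqrt hNk
  have hq2 : (0:ℝ) < q ^ 2 := pow_pos hq 2
  have hqne : q ≠ 0 := ne_of_gt hq
  have hDne : m + q * s ≠ 0 := ne_of_gt hden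
  have key : q ^ 2 * s ^ 2 = q ^ 2 * N ^ 2 + m ^ 2 - q ^ 2 := by
    rw [hs2, hk]; field_simp; ring
  refine ⟨div_pos hq2 hden, ?_, ?_⟩
  · field_simp
    nlinarith [key]
  · have hiff : 0 < q ^ 2 / (m + q * s) * (1 + N) - m ↔
        m * (m + q * s) < q ^ 2 * (1 + N) := by
      rw [sub_pos, div_mul_eq_mul_div, lt_div_iff₀ hden]
    rw [hiff]
    constructor
    · intro h
      by_contra hc
      push_neg at hc
      obtain ⟨hm0, hqm⟩ := hc
      have hqm' : q ≤ m := le_of_not_gt fun h => absurd (hqm h) (not_le.mpr hm0)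
      have hk0 : 0 ≤ k := by nlinarith
      have hNs : N ≤ s := by
        rw [hsdef]
        nlinarith [Real.sq_sqrt hNk, Real.sqrt_nonneg (N ^ 2 + k)]
      nlinarith [mul_le_mul hqm' hNs hN (le_trans hq.le hqm')]
    · rintro (hm | ⟨hmq, hm⟩)
      · nlinarith
      · have hkneg : k ≤ 0 := by nlinarith
        have hsN : s ≤ N := by nlinarith
        nlinarith [mul_le_mul hmq.le hsN hs0 hq.le]
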